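/- Let G be a finite abelian group. For all u, v ∈ G one has 4 · ( Σ_{x∈G} ψ(u+2x, v) ) = Σ_{x∈G} φ(0, v, u+2x) in ⋀[ℤ]² A. (This is the paper's Lemma on R_u(v).) -/
import Mathlib


noncomputable def wedge (R : Type*) [CommRing R] {M : Type*} [AddCommGroup M] [Module R M]
    (u v : M) : ⋀[R]^2 M :=
  ⟨ExteriorAlgebra.ιMulti R 2 ![u, v],
    ExteriorAlgebra.ιMulti_range R 2 (Set.mem_range_self _)⟩

/-- The additive counterpart of `u(a,b,c,d) ∧ (1 - u(a,b,c,d))`, built from the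
three-variable expression `φ`. -/
noncomputable def phi (R : Type*) [CommRing R] {M G : Type*} [AddCommGroup M] [Module R M]
    [AddCommGroup G] (g : G → M) (x y z : G) : ⋀[R]^2 M :=
  wedge R (g (z + x) + g (z - x)) (g (y + x) + g (y - x))
    + wedge R (g (y + x) + g (y - x)) (g (z + y) + g (z - y))
    + wedge R (g (z + y) + g (z - y)) (g (z + x) + g (z - x))

noncomputable def delta (R : Type*) [CommRing R] {M G : Type*} [AddCommGroup M] [Module R M]
    [AddCommGroup G] (g : G → M) (a b c d : G) : ⋀[R]^2 M :=
  phi R g a b c + phi R g c d a + phi R g b a d + phi R g d c b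

/-- The additive counterpart of the Manin 3-term expression
`g_a ∧ g_b + g_b ∧ g_c + g_c ∧ g_a` with `a + b + c = 0`. -/
noncomputable def psi (R : Type*) [CommRing R] {M G : Type*} [AddCommGroup M] [Module R M]
    [AddCommGroup G] (g : G → M) (a b : G) : ⋀[R]^2 M :=
  wedge R (g a) (g b) + wedge R (g b) (g (-a - b)) + wedge R (g (-a - b)) (g a)

lemma wedge_coe (R : Type*) [CommRing R] {M : Type*} [AddCommGroup M] [Module R M] (u v : M) :
    ((wedge R u v : ⋀[R]^2 M) : ExteriorAlgebra R M)
      = ExteriorAlgebra.ι R u * ExteriorAlgebra.ι R v := by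
  simp [wedge, ExteriorAlgebra.ιMulti_apply, List.ofFn_succ]

lemma wedge_add_left (R : Type*) [CommRing R] {M : Type*} [AddCommGroup M] [Module R M]
    (u w v : M) : wedge R (u + w) v = wedge R u v + wedge R w v := by
  apply Subtype.ext; simp [wedge_coe, add_mul]

lemma wedge_add_right (R : Type*) [CommRing R] {M : Type*} [AddCommGroup M] [Module R M]
    (u v w : M) : wedge R u (v + w) = wedge R u v + wedge R u w := by
  apply Subtype.ext; simp [wedge_coe, mul_add]

/-- Lemma 4.6 of Brunault, *On the K₄ group of modular curves*:
`4 R_u(v) = Σ_{x ∈ G} φ(0, v, u+2x)` where `R_u(v) = Σ_{x ∈ G} ψ(u+2x, v)`. -/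
theorem four_smul_R_eq_sum_phi {A G : Type*} [AddCommGroup A] [AddCommGroup G] [Fintype G]
    (g : G → A) (hg : ∀ x : G, g (-x) = g x) (u v : G) :
    4 • ∑ x : G, psi ℤ g (u + 2 • x) v = ∑ x : G, phi ℤ g 0 v (u + 2 • x) := by
  set f : G → ⋀[ℤ]^2 A := fun x =>
    wedge ℤ (g v) (g (u + 2 • x + v)) + wedge ℤ (g (u + 2 • x + v)) (g (u + 2 • x)) with hf
  have key : ∀ x : G,
      phi ℤ g 0 v (u + 2 • x) + 2 • f x = 4 • psi ℤ g (u + 2 • x) v + 2 • f (-x - u) := by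
    intro x
    have h1 : g (-(u + 2 • x) - v) = g (u + 2 • x + v) := by
      rw [show -(u + 2 • x) - v = -((u + 2 • x) + v) by abel, hg]
    have h2 : g (u + 2 • (-x - u) + v) = g (u + 2 • x - v) := by
      rw [show u + 2 • (-x - u) + v = -(u + 2 • x - v) by
        simp [smul_sub, smul_neg]; abel, hg]
    have h3 : g (u + 2 • (-x - u)) = g (u + 2 • x) := by
      rw [show u + 2 • (-x - u) = -(u + 2 • x) by
        simp [smul_sub, smul_neg]; abel, hg]
    simp only [hf, phi, psi, h1, h2, h3, add_zero, sub_zero,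
      wedge_add_left, wedge_add_right]
    abel
  have hsum : ∑ x : G, (phi ℤ g 0 v (u + 2 • x) + 2 • f x)
      = ∑ x : G, (4 • psi ℤ g (u + 2 • x) v + 2 • f (-x - u)) :=
    Finset.sum_congr rfl fun x _ => key x
  have hbij : ∑ x : G, f (-x - u) = ∑ x : G, f x := by
    apply Fintype.sum_equiv (Equiv.subLeft (-u : G))
    intro x
    congr 1
    simp [Equiv.subLeft, sub_eq_add_neg]
    abel
  simp only [Finset.sum_add_distrib, ← Finset.smul_sum, hbij] at hsum
  exact (add_right_cancel hsum).symm
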